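/- arXiv:1812.06070 — 2 statements merged into one kernel-verified Lean document; each statement's English description precedes it below -/
import Mathlib

section
/- Let g, h : ℝ^m → ℝ be strongly convex with modulus ρ > 0, with g continuously differentiable, φ := g − h, and inf φ > −∞. Let {x_k}, {y_k}, {λ_k} be a BDCA sequence (with parameter α > 0) and suppose x* is a cluster point of {x_k} with φ(x_k) > φ(x*) for all k. Assume ∇g is Lipschitz continuous on a neighborhood of x*, and that φ satisfies the strong Kurdyka–Łojasiewicz inequality at x* (with desingularizing function ψ as below). Then the sequence {x_k} has finite length: ∑_{k=0}^{∞} ‖x_{k+1} − x_k‖ < +∞. -/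
open scoped RealInnerProductSpace
open Filter Topology

private lemma strong_grad' {m : ℕ} (g : EuclideanSpace ℝ (Fin m) → ℝ) (ρ : ℝ)
    (hg : ConvexOn ℝ Set.univ fun z => g z - ρ / 2 * ‖z‖ ^ 2)
    (hg1 : ContDiff ℝ 1 g) (a b : EuclideanSpace ℝ (Fin m)) :
    g b + ⟪gradient g b, a - b⟫ + ρ / 2 * ‖a - b‖ ^ 2 ≤ g a := by
  set v : EuclideanSpace ℝ (Fin m) := a - b with hv
  set F : ℝ → ℝ := fun t => g (b + t • v) - ρ / 2 * ‖b + t • v‖ ^ 2 with hF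
  have hline : ∀ t : ℝ, AffineMap.lineMap b a t = b + t • v := by
    intro t
    rw [AffineMap.lineMap_apply_module, hv]
    module
  have hFconv : ConvexOn ℝ Set.univ F := by
    have h2 := hg.comp_affineMap (AffineMap.lineMap b a)
    rw [Set.preimage_univ] at h2
    have he : (fun z => g z - ρ / 2 * ‖z‖ ^ 2) ∘ (AffineMap.lineMap b a) = F := by
      funext t
      simp only [Function.comp_apply, hline t, hF]
    rwa [he] at h2
  have hgb : HasFDerivAt g (InnerProductSpace.toDual ℝ _ (gradient g b)) b := by
    have hdg : DifferentiableAt ℝ g b := (hg1.differentiable one_ne_zero).differentiableAt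
    exact hasGradientAt_iff_hasFDerivAt.mp hdg.hasGradientAt
  have hinner : HasDerivAt (fun t : ℝ => b + t • v) v 0 := by
    simpa using ((hasDerivAt_id (0 : ℝ)).smul_const v).const_add b
  have hcomp : HasDerivAt (fun t : ℝ => g (b + t • v)) ⟪gradient g b, v⟫ 0 := by
    have h3 : HasFDerivAt g (InnerProductSpace.toDual ℝ _ (gradient g b))
        ((fun t : ℝ => b + t • v) 0) := by simpa using hgb
    have := h3.comp_hasDerivAt (0 : ℝ) hinner
    simpa [InnerProductSpace.toDual_apply_apply, Function.comp_def] using this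
  have hNeq : (fun t : ℝ => ρ / 2 * ‖b + t • v‖ ^ 2)
      = fun t : ℝ => ρ / 2 * (‖b‖ ^ 2 + 2 * (t * ⟪b, v⟫) + t ^ 2 * ‖v‖ ^ 2) := by
    funext t
    rw [norm_add_sq_real, real_inner_smul_right, norm_smul]
    simp [mul_pow, sq_abs]
  have hpoly : HasDerivAt (fun t : ℝ => ρ / 2 * ‖b + t • v‖ ^ 2) (ρ * ⟪b, v⟫) 0 := by
    rw [hNeq]
    have ha : HasDerivAt (fun t : ℝ => t * ⟪b, v⟫) ⟪b, v⟫ 0 := by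
      simpa using (hasDerivAt_id (0 : ℝ)).mul_const ⟪b, v⟫
    have hb2 : HasDerivAt (fun t : ℝ => t ^ 2 * ‖v‖ ^ 2) 0 0 := by
      simpa using (hasDerivAt_pow 2 (0 : ℝ)).mul_const (‖v‖ ^ 2)
    have := (((ha.const_mul 2).add hb2).const_add (‖b‖ ^ 2)).const_mul (ρ / 2)
    rw [show ρ * ⟪b, v⟫ = ρ / 2 * (2 * ⟪b, v⟫ + 0) by ring]
    refine this.congr_of_eventuallyEq (Filter.Eventually.of_forall fun y => ?_)
    simp only [Pi.add_apply]; ring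
  have hF' : HasDerivAt F (⟪gradient g b, v⟫ - ρ * ⟪b, v⟫) 0 := hcomp.sub hpoly
  have hslope := hFconv.le_slope_of_hasDerivAt (Set.mem_univ 0) (Set.mem_univ 1) one_pos hF'
  rw [slope_def_field] at hslope
  have hF1 : F 1 = g a - ρ / 2 * ‖a‖ ^ 2 := by
    simp only [hF, one_smul, hv]
    congr 2 <;> rw [add_sub_cancel]
  have hF0 : F 0 = g b - ρ / 2 * ‖b‖ ^ 2 := by simp [hF]
  rw [hF1, hF0] at hslope
  have hvn : ‖v‖ ^ 2 = ‖a‖ ^ 2 - 2 * ⟪a, b⟫ + ‖b‖ ^ 2 := by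
    rw [hv, norm_sub_sq_real]
  have hbv : ⟪b, v⟫ = ⟪a, b⟫ - ‖b‖ ^ 2 := by
    rw [hv, inner_sub_right, real_inner_self_eq_norm_sq, real_inner_comm]
  rw [sub_zero, div_one] at hslope
  have hv2 : ρ / 2 * ‖v‖ ^ 2 = ρ / 2 * ‖a‖ ^ 2 - ρ * ⟪a, b⟫ + ρ / 2 * ‖b‖ ^ 2 := by
    rw [hvn]; ring
  have hbv2 : ρ * ⟪b, v⟫ = ρ * ⟪a, b⟫ - ρ * ‖b‖ ^ 2 := by rw [hbv]; ring
  linarith [hslope, hv2, hbv2]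

/-- The convex subdifferential of `f` at `x`. -/
def subdiff {m : ℕ} (f : EuclideanSpace ℝ (Fin m) → ℝ) (x : EuclideanSpace ℝ (Fin m)) :
    Set (EuclideanSpace ℝ (Fin m)) :=
  {u | ∀ z, f x + ⟪u, z - x⟫ ≤ f z}

theorem stmt14 {m : ℕ} (g h : EuclideanSpace ℝ (Fin m) → ℝ) (ρ : ℝ) (hρ : 0 < ρ)
    (hg : ConvexOn ℝ Set.univ fun z => g z - ρ / 2 * ‖z‖ ^ 2)
    (hh : ConvexOn ℝ Set.univ fun z => h z - ρ / 2 * ‖z‖ ^ 2)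
    (hg1 : ContDiff ℝ 1 g)
    (φ : EuclideanSpace ℝ (Fin m) → ℝ) (hφ : φ = fun z => g z - h z)
    (hbdd : BddBelow (Set.range φ))
    (α : ℝ) (hα : 0 < α)
    (x y : ℕ → EuclideanSpace ℝ (Fin m)) (lam : ℕ → ℝ)
    (hlam : ∀ k, 0 ≤ lam k)
    (hsub : ∀ k, gradient g (y k) ∈ subdiff h (x k))
    (hdesc : ∀ k, φ (y k + lam k • (y k - x k)) ≤ φ (y k) - α * lam k ^ 2 * ‖y k - x k‖ ^ 2)
    (hnext : ∀ k, x (k + 1) = y k + lam k • (y k - x k))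
    (xs : EuclideanSpace ℝ (Fin m))
    (hcluster : MapClusterPt xs atTop x)
    (hgt : ∀ k, φ xs < φ (x k))
    -- ∇g is Lipschitz continuous on a neighborhood of x*
    (hLip : ∃ L : NNReal, ∃ U ∈ 𝓝 xs, LipschitzOnWith L (fun z => gradient g z) U)
    -- φ satisfies the strong Kurdyka–Łojasiewicz inequality at x*
    (hKL : ∃ η > (0 : ℝ), ∃ U ∈ 𝓝 xs, ∃ ψ : ℝ → ℝ,
      ψ 0 = 0 ∧
      (∀ t ∈ Set.Icc (0 : ℝ) η, 0 ≤ ψ t) ∧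
      ConcaveOn ℝ (Set.Icc (0 : ℝ) η) ψ ∧
      ContDiffOn ℝ 1 ψ (Set.Ioo (0 : ℝ) η) ∧
      (∀ t ∈ Set.Ioo (0 : ℝ) η, 0 < deriv ψ t) ∧
      (∀ z ∈ U, φ xs < φ z → φ z < φ xs + η →
        1 ≤ deriv ψ (φ z - φ xs) *
          Metric.infDist 0 ((fun u => gradient g z - u) '' subdiff h z))) :
    Summable (fun k => ‖x (k + 1) - x k‖) := by
  classical
  obtain ⟨L, UL, hUL, hLipL⟩ := hLip
  obtain ⟨η, hη, UK, hUK, ψ, hψ0, hψnn, hψconc, hψC1, hψdpos, hKLineq⟩ := hKL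
  -- continuity of φ
  have hcont_h : Continuous h := by
    have h1 : Continuous fun z : EuclideanSpace ℝ (Fin m) => h z - ρ / 2 * ‖z‖ ^ 2 :=
      continuousOn_univ.mp (hh.continuousOn isOpen_univ)
    have he : (fun z : EuclideanSpace ℝ (Fin m) =>
        (h z - ρ / 2 * ‖z‖ ^ 2) + ρ / 2 * ‖z‖ ^ 2) = h := by funext z; ring
    rw [← he]
    exact h1.add (continuous_const.mul (continuous_norm.pow 2))
  have hcontφ : Continuous φ := by rw [hφ]; exact hg1.continuous.sub hcont_h
  -- sufficient decrease
  have stepA : ∀ k, φ (y k) ≤ φ (x k) - ρ / 2 * ‖y k - x k‖ ^ 2 := by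
    intro k
    have h1 := strong_grad' g ρ hg hg1 (x k) (y k)
    have h2 : h (x k) + ⟪gradient g (y k), y k - x k⟫ ≤ h (y k) := hsub k (y k)
    have h3 : ⟪gradient g (y k), x k - y k⟫ = -⟪gradient g (y k), y k - x k⟫ := by
      rw [← inner_neg_right, neg_sub]
    have h4 : ‖x k - y k‖ = ‖y k - x k‖ := norm_sub_rev _ _
    rw [h3, h4] at h1
    simp only [hφ]
    linarith
  have key : ∀ k, φ (x (k + 1)) + (ρ / 2 + α * lam k ^ 2) * ‖y k - x k‖ ^ 2 ≤ φ (x k) := by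
    intro k
    have h1 := hdesc k
    rw [← hnext k] at h1
    have h2 := stepA k
    nlinarith [h1, h2]
  have hextra : ∀ k, 0 ≤ (ρ / 2 + α * lam k ^ 2) * ‖y k - x k‖ ^ 2 := by
    intro k
    apply mul_nonneg (by positivity) (sq_nonneg _)
  have hanti : ∀ j k, j ≤ k → φ (x k) ≤ φ (x j) := by
    have hA : Antitone (fun k => φ (x k)) :=
      antitone_nat_of_succ_le (fun k => by linarith [key k, hextra k])
    exact fun j k hjk => hA hjk
  -- convergence of values
  have htends : Tendsto (fun k => φ (x k)) atTop (𝓝 (φ xs)) := by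
    rw [Metric.tendsto_atTop]
    intro ε hε
    obtain ⟨δ, hδ, hball⟩ := Metric.continuousAt_iff.mp (hcontφ.continuousAt (x := xs)) ε hε
    have hfreq : ∃ᶠ k in atTop, dist (x k) xs < δ := by
      have := mapClusterPt_iff_frequently.mp hcluster (Metric.ball xs δ) (Metric.ball_mem_nhds xs hδ)
      exact this.mono (fun k hk => Metric.mem_ball.mp hk)
    obtain ⟨N, hN⟩ := hfreq.exists
    refine ⟨N, fun k hk => ?_⟩
    have h1 : φ (x k) ≤ φ (x N) := hanti N k hk
    have h2 : dist (φ (x N)) (φ xs) < ε := hball hN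
    rw [Real.dist_eq] at h2 ⊢
    have h2' : φ (x N) - φ xs < ε := (le_abs_self _).trans_lt h2
    rw [abs_of_pos (by linarith [hgt k] : (0 : ℝ) < φ (x k) - φ xs)]
    linarith
  -- constants
  obtain ⟨c, hcdef⟩ : ∃ c : ℝ, c = min (ρ / 4) (Real.sqrt α * Real.sqrt ρ) := ⟨_, rfl⟩
  have hcpos : 0 < c := by rw [hcdef]; exact lt_min (by positivity) (by positivity)
  obtain ⟨L', hL'def⟩ : ∃ L' : ℝ, L' = max (L : ℝ) 1 := ⟨_, rfl⟩
  have hL'pos : (0 : ℝ) < L' := by rw [hL'def]; exact lt_of_lt_of_le one_pos (le_max_right _ _)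
  have hLle : (L : ℝ) ≤ L' := by rw [hL'def]; exact le_max_left _ _
  have hLip' : ∀ z ∈ UL, ∀ w ∈ UL, ‖gradient g z - gradient g w‖ ≤ L' * ‖z - w‖ := by
    intro z hz w hw
    have h1 := hLipL.dist_le_mul z hz w hw
    calc ‖gradient g z - gradient g w‖ = dist (gradient g z) (gradient g w) :=
          (dist_eq_norm _ _).symm
      _ ≤ L * dist z w := h1
      _ ≤ L' * ‖z - w‖ := by
          rw [dist_eq_norm]
          exact mul_le_mul_of_nonneg_right hLle (norm_nonneg _)
  have hcineq : ∀ t, 0 ≤ t → c * (1 + t) ≤ ρ / 2 + α * t ^ 2 := by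
    intro t ht
    have h1 : c ≤ ρ / 4 := hcdef ▸ min_le_left _ _
    have h2 : c ≤ Real.sqrt α * Real.sqrt ρ := hcdef ▸ min_le_right _ _
    have ha2 : Real.sqrt α ^ 2 = α := Real.sq_sqrt hα.le
    have hr2 : Real.sqrt ρ ^ 2 = ρ := Real.sq_sqrt hρ.le
    nlinarith [sq_nonneg (Real.sqrt α * t - Real.sqrt ρ / 2),
      mul_le_mul_of_nonneg_right h2 ht]
  -- neighborhood radius
  obtain ⟨r, hrpos, hrsub⟩ := Metric.mem_nhds_iff.mp (Filter.inter_mem hUL hUK)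
  -- ψ monotone
  have hψmono : StrictMonoOn ψ (Set.Ioo 0 η) :=
    strictMonoOn_of_deriv_pos (convex_Ioo _ _) hψC1.continuousOn
      (fun t ht => hψdpos t (by rwa [interior_Ioo] at ht))
  have hψdiff : ∀ t ∈ Set.Ioo (0 : ℝ) η, DifferentiableAt ℝ ψ t := fun t ht =>
    (hψC1.differentiableOn one_ne_zero).differentiableAt (isOpen_Ioo.mem_nhds ht)
  obtain ⟨Δ, hΔeq⟩ : ∃ Δ : ℕ → ℝ, ∀ k, Δ k = φ (x k) - φ xs := ⟨_, fun _ => rfl⟩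
  have hΔpos : ∀ k, 0 < Δ k := fun k => by rw [hΔeq]; exact sub_pos.mpr (hgt k)
  have hΔanti : ∀ {j k}, j ≤ k → Δ k ≤ Δ j := fun hjk => by
    rw [hΔeq, hΔeq]; exact sub_le_sub_right (hanti _ _ hjk) _
  have hΔ0 : Tendsto Δ atTop (𝓝 0) := by
    have h0 := htends.sub_const (φ xs)
    rw [sub_self] at h0
    have he : Δ = fun k => φ (x k) - φ xs := funext hΔeq
    rwa [he]
  obtain ⟨K1, hK1⟩ : ∃ K1, ∀ k ≥ K1, Δ k < η :=
    eventually_atTop.mp (hΔ0.eventually_lt_const hη)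
  have hΔIoo : ∀ k, K1 ≤ k → Δ k ∈ Set.Ioo (0 : ℝ) η := fun k hk => ⟨hΔpos k, hK1 k hk⟩
  have hΔIcc : ∀ k, K1 ≤ k → Δ k ∈ Set.Icc (0 : ℝ) η := fun k hk =>
    ⟨(hΔpos k).le, (hK1 k hk).le⟩
  obtain ⟨s, hsdef⟩ : ∃ s : ℕ → ℝ, ∀ n, s n = ψ (Δ (K1 + n)) := ⟨_, fun _ => rfl⟩
  have hs_anti : Antitone s := by
    intro i j hij
    rw [hsdef, hsdef]
    exact hψmono.monotoneOn (hΔIoo (K1 + j) (by omega)) (hΔIoo (K1 + i) (by omega))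
      (hΔanti (by omega))
  have hsnn : ∀ n, 0 ≤ s n := fun n => by rw [hsdef]; exact hψnn _ (hΔIcc _ (by omega))
  have hsbdd : BddBelow (Set.range s) := by
    refine ⟨0, ?_⟩
    rintro z ⟨n, rfl⟩
    exact hsnn n
  obtain ⟨P, hPdef⟩ : ∃ P : ℝ, P = ⨅ n, s n := ⟨_, rfl⟩
  have htP : Tendsto s atTop (𝓝 P) := by
    rw [hPdef]
    exact tendsto_atTop_ciInf hs_anti hsbdd
  have hPle : ∀ k, K1 ≤ k → P ≤ ψ (Δ k) := by
    intro k hk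
    have he : ψ (Δ k) = s (k - K1) := by
      rw [hsdef, show K1 + (k - K1) = k by omega]
    rw [he, hPdef]
    exact ciInf_le hsbdd _
  -- energy inequality in terms of Δ
  have henergy : ∀ k, (ρ / 2 + α * lam k ^ 2) * ‖y k - x k‖ ^ 2 ≤ Δ k - Δ (k + 1) := by
    intro k
    rw [hΔeq, hΔeq]
    linarith [key k]
  -- the KL step
  have keyKL : ∀ k, K1 ≤ k → dist (x k) xs < r → dist (y k) xs < r →
      (1 + lam k) * ‖y k - x k‖ ≤ L' / c * (ψ (Δ k) - ψ (Δ (k + 1))) := by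
    intro k hkK1 hxk hyk
    have hxmem := hrsub (Metric.mem_ball.mpr hxk)
    have hymem := hrsub (Metric.mem_ball.mpr hyk)
    have hΔk := hΔIoo k hkK1
    have hΔk1 := hΔIoo (k + 1) (by omega)
    have hKL1 : 1 ≤ deriv ψ (Δ k) *
        Metric.infDist 0 ((fun u => gradient g (x k) - u) '' subdiff h (x k)) := by
      rw [show Δ k = φ (x k) - φ xs from hΔeq k] at hΔk ⊢
      exact hKLineq (x k) hxmem.2 (hgt k) (by linarith [hΔk.2])
    have hmemim : gradient g (x k) - gradient g (y k) ∈
        (fun u => gradient g (x k) - u) '' subdiff h (x k) := ⟨_, hsub k, rfl⟩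
    have hDle : Metric.infDist 0 ((fun u => gradient g (x k) - u) '' subdiff h (x k)) ≤
        L' * ‖y k - x k‖ := by
      calc Metric.infDist 0 ((fun u => gradient g (x k) - u) '' subdiff h (x k)) ≤
          dist 0 (gradient g (x k) - gradient g (y k)) := Metric.infDist_le_dist_of_mem hmemim
        _ = ‖gradient g (x k) - gradient g (y k)‖ := dist_zero_left _
        _ ≤ L' * ‖x k - y k‖ := hLip' _ hxmem.1 _ hymem.1
        _ = L' * ‖y k - x k‖ := by rw [norm_sub_rev]
    have hDnn : 0 ≤ Metric.infDist 0 ((fun u => gradient g (x k) - u) '' subdiff h (x k)) :=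
      Metric.infDist_nonneg
    have hψ'pos : 0 < deriv ψ (Δ k) := hψdpos _ hΔk
    have hdpos : 0 < ‖y k - x k‖ := by
      rcases lt_or_ge 0 ‖y k - x k‖ with hp | hp
      · exact hp
      · exfalso
        have h0 : ‖y k - x k‖ = 0 := le_antisymm hp (norm_nonneg _)
        rw [h0, mul_zero] at hDle
        nlinarith [hKL1]
    have hconc : deriv ψ (Δ k) * (Δ k - Δ (k + 1)) ≤ ψ (Δ k) - ψ (Δ (k + 1)) := by
      rcases eq_or_lt_of_le (hΔanti (Nat.le_succ k)) with heq | hlt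
      · rw [heq]; simp
      · have hslope := hψconc.deriv_le_slope (Set.Ioo_subset_Icc_self hΔk1)
          (Set.Ioo_subset_Icc_self hΔk) hlt (hψdiff _ hΔk)
        rw [slope_def_field] at hslope
        have hpos : 0 < Δ k - Δ (k + 1) := sub_pos.mpr hlt
        calc deriv ψ (Δ k) * (Δ k - Δ (k + 1)) ≤
            (ψ (Δ k) - ψ (Δ (k + 1))) / (Δ k - Δ (k + 1)) * (Δ k - Δ (k + 1)) :=
              mul_le_mul_of_nonneg_right hslope hpos.le
          _ = ψ (Δ k) - ψ (Δ (k + 1)) := div_mul_cancel₀ _ hpos.ne'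
    have h1 : 1 ≤ deriv ψ (Δ k) * (L' * ‖y k - x k‖) :=
      le_trans hKL1 (mul_le_mul_of_nonneg_left hDle hψ'pos.le)
    have t1 : deriv ψ (Δ k) * ((ρ / 2 + α * lam k ^ 2) * ‖y k - x k‖ ^ 2) ≤
        deriv ψ (Δ k) * (Δ k - Δ (k + 1)) :=
      mul_le_mul_of_nonneg_left (henergy k) hψ'pos.le
    rw [div_mul_eq_mul_div, le_div_iff₀ hcpos]
    calc (1 + lam k) * ‖y k - x k‖ * c = c * ((1 + lam k) * ‖y k - x k‖) := by ring
      _ ≤ deriv ψ (Δ k) * (L' * ‖y k - x k‖) * (c * ((1 + lam k) * ‖y k - x k‖)) :=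
          le_mul_of_one_le_left
            (mul_nonneg hcpos.le (mul_nonneg (by linarith [hlam k]) (norm_nonneg _))) h1
      _ = L' * (deriv ψ (Δ k) * (c * (1 + lam k) * ‖y k - x k‖ ^ 2)) := by ring
      _ ≤ L' * (deriv ψ (Δ k) * ((ρ / 2 + α * lam k ^ 2) * ‖y k - x k‖ ^ 2)) := by
          apply mul_le_mul_of_nonneg_left _ hL'pos.le
          apply mul_le_mul_of_nonneg_left _ hψ'pos.le
          exact mul_le_mul_of_nonneg_right (hcineq _ (hlam k)) (sq_nonneg _)
      _ ≤ L' * (deriv ψ (Δ k) * (Δ k - Δ (k + 1))) := mul_le_mul_of_nonneg_left t1 hL'pos.le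
      _ ≤ L' * (ψ (Δ k) - ψ (Δ (k + 1))) := mul_le_mul_of_nonneg_left hconc hL'pos.le
  -- step norms
  have hterm : ∀ k, ‖x (k + 1) - x k‖ = (1 + lam k) * ‖y k - x k‖ := by
    intro k
    rw [hnext k]
    have he : y k + lam k • (y k - x k) - x k = (1 + lam k) • (y k - x k) := by
      rw [add_smul, one_smul]
      abel
    rw [he, norm_smul, Real.norm_eq_abs, abs_of_nonneg (by linarith [hlam k])]
  -- choice of k0
  have E2 : ∀ᶠ k in atTop, K1 ≤ k := eventually_ge_atTop K1
  have hδ'pos : 0 < c * r / (4 * L') := by positivity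
  have E3 : ∀ᶠ k in atTop, ψ (Δ k) < P + c * r / (4 * L') := by
    obtain ⟨N3, hN3⟩ := eventually_atTop.mp
      (htP.eventually_lt_const (lt_add_of_pos_right P hδ'pos))
    refine eventually_atTop.mpr ⟨K1 + N3, fun k hk => ?_⟩
    have h1 := hN3 (k - K1) (by omega)
    rw [hsdef, show K1 + (k - K1) = k by omega] at h1
    exact h1
  have E4 : ∀ᶠ k in atTop, Δ k < ρ * (r / 4) ^ 2 / 2 :=
    hΔ0.eventually_lt_const (by positivity)
  have hfreq : ∃ᶠ k in atTop, dist (x k) xs < r / 4 := by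
    have := mapClusterPt_iff_frequently.mp hcluster (Metric.ball xs (r / 4))
      (Metric.ball_mem_nhds xs (by positivity))
    exact this.mono (fun k hk => Metric.mem_ball.mp hk)
  obtain ⟨k0, hb1, hb2, hb3, hb4⟩ := (hfreq.and_eventually (E2.and (E3.and E4))).exists
  -- main induction
  have main : ∀ n : ℕ,
      (∑ j ∈ Finset.Ico k0 (k0 + n), (1 + lam j) * ‖y j - x j‖) ≤
        L' / c * (ψ (Δ k0) - ψ (Δ (k0 + n))) ∧
      dist (x (k0 + n)) xs ≤ dist (x k0) xs +
        ∑ j ∈ Finset.Ico k0 (k0 + n), (1 + lam j) * ‖y j - x j‖ := by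
    intro n
    induction n with
    | zero => simp
    | succ n ih =>
      obtain ⟨ih1, ih2⟩ := ih
      have hMnn : (0 : ℝ) ≤ L' / c := div_nonneg hL'pos.le hcpos.le
      have hPk : P ≤ ψ (Δ (k0 + n)) := hPle _ (by omega)
      have hPk0 : P ≤ ψ (Δ k0) := hPle _ (by omega)
      have hsum_le : ∑ j ∈ Finset.Ico k0 (k0 + n), (1 + lam j) * ‖y j - x j‖ ≤ r / 4 := by
        have hm1 : L' / c * (ψ (Δ k0) - ψ (Δ (k0 + n))) ≤
            L' / c * (c * r / (4 * L')) := by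
          apply mul_le_mul_of_nonneg_left _ hMnn
          linarith
        have hm2 : L' / c * (c * r / (4 * L')) = r / 4 := by
          field_simp
        linarith
      have hxk : dist (x (k0 + n)) xs < r / 2 := by
        calc dist (x (k0 + n)) xs ≤ dist (x k0) xs +
              ∑ j ∈ Finset.Ico k0 (k0 + n), (1 + lam j) * ‖y j - x j‖ := ih2
          _ < r / 4 + r / 4 := by linarith
          _ = r / 2 := by ring
      have hdk : ‖y (k0 + n) - x (k0 + n)‖ < r / 4 := by
        have h1 : ρ / 2 * ‖y (k0 + n) - x (k0 + n)‖ ^ 2 ≤ Δ (k0 + n) - Δ (k0 + n + 1) := by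
          have he1 := henergy (k0 + n)
          have he2 : (ρ / 2 + α * lam (k0 + n) ^ 2) * ‖y (k0 + n) - x (k0 + n)‖ ^ 2 =
              ρ / 2 * ‖y (k0 + n) - x (k0 + n)‖ ^ 2 +
              α * lam (k0 + n) ^ 2 * ‖y (k0 + n) - x (k0 + n)‖ ^ 2 := by ring
          have he3 : 0 ≤ α * lam (k0 + n) ^ 2 * ‖y (k0 + n) - x (k0 + n)‖ ^ 2 := by positivity
          linarith
        have h2 : 0 < Δ (k0 + n + 1) := hΔpos _
        have h3 : Δ (k0 + n) ≤ Δ k0 := hΔanti (by omega)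
        by_contra hcon
        push_neg at hcon
        have h4 : (r / 4) ^ 2 ≤ ‖y (k0 + n) - x (k0 + n)‖ ^ 2 :=
          pow_le_pow_left₀ (by positivity) hcon 2
        have h5 := mul_le_mul_of_nonneg_left h4 (by positivity : (0:ℝ) ≤ ρ / 2)
        linarith
      have hyk : dist (y (k0 + n)) xs < r := by
        have ht := dist_triangle (y (k0 + n)) (x (k0 + n)) xs
        have hd2 : dist (y (k0 + n)) (x (k0 + n)) = ‖y (k0 + n) - x (k0 + n)‖ :=
          dist_eq_norm _ _
        linarith
      have hstep := keyKL (k0 + n) (by omega) (by linarith) hyk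
      have hsucc : k0 + (n + 1) = k0 + n + 1 := rfl
      constructor
      · rw [hsucc, Finset.sum_Ico_succ_top (by omega : k0 ≤ k0 + n)]
        linarith
      · rw [hsucc, Finset.sum_Ico_succ_top (by omega : k0 ≤ k0 + n)]
        have htri := dist_triangle (x (k0 + n + 1)) (x (k0 + n)) xs
        have hxx : dist (x (k0 + n + 1)) (x (k0 + n)) =
            (1 + lam (k0 + n)) * ‖y (k0 + n) - x (k0 + n)‖ := by
          rw [dist_eq_norm]
          exact hterm (k0 + n)
        linarith
  -- conclusion
  have hbound : ∀ n, ∑ j ∈ Finset.Ico k0 (k0 + n), (1 + lam j) * ‖y j - x j‖ ≤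
      L' / c * (ψ (Δ k0) - P) := by
    intro n
    have h1 := (main n).1
    have h2 : P ≤ ψ (Δ (k0 + n)) := hPle _ (by omega)
    have h3 : L' / c * (ψ (Δ k0) - ψ (Δ (k0 + n))) ≤ L' / c * (ψ (Δ k0) - P) :=
      mul_le_mul_of_nonneg_left (by linarith) (div_nonneg hL'pos.le hcpos.le)
    linarith
  have hsum_eq : ∀ n, ∑ i ∈ Finset.range n, ‖x (i + k0 + 1) - x (i + k0)‖ =
      ∑ j ∈ Finset.Ico k0 (k0 + n), (1 + lam j) * ‖y j - x j‖ := by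
    intro n
    rw [Finset.sum_Ico_eq_sum_range]
    simp only [add_tsub_cancel_left]
    apply Finset.sum_congr rfl
    intro i _
    rw [← hterm, Nat.add_comm i k0]
  rw [← summable_nat_add_iff k0]
  exact summable_of_sum_range_le (fun n => norm_nonneg _)
    (fun n => by rw [hsum_eq]; exact hbound n)
end

section
/- Let g, h : ℝ^m → ℝ be strongly convex with modulus ρ > 0, with g continuously differentiable, φ := g − h, and inf φ > −∞. Let {x_k}, {y_k}, {λ_k} be a BDCA sequence (with parameter α > 0) converging to a limit point x*. Assume ∇g is Lipschitz continuous on a neighborhood of x*, and that φ satisfies the strong Kurdyka–Łojasiewicz inequality at x* with desingularizing function ψ(t) = M t^{1−θ} for some M > 0 and exponent θ = 0; that is, there exist η > 0 and a neighborhood U of x* such that M · dist(0, ∇g(x) − ∂h(x)) ≥ 1 for all x ∈ U with φ(x*) < φ(x) < φ(x*) + η. Then {x_k} converges to x* in a finite number of steps: x_k = x* for all sufficiently large k. -/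
open scoped RealInnerProductSpace
open Filter Topology

lemma norm_combo {m : ℕ} (a b : EuclideanSpace ℝ (Fin m)) (t : ℝ) :
    ‖(1 - t) • a + t • b‖ ^ 2
      = (1 - t) * ‖a‖ ^ 2 + t * ‖b‖ ^ 2 - t * (1 - t) * ‖b - a‖ ^ 2 := by
  have e : ∀ v : EuclideanSpace ℝ (Fin m), ‖v‖ ^ 2 = ⟪v, v⟫ := by
    intro v; rw [real_inner_self_eq_norm_sq]
  rw [e, e, e, e]
  simp only [inner_add_left, inner_add_right, inner_sub_left, inner_sub_right,
    real_inner_smul_left, real_inner_smul_right]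
  ring_nf

lemma convexOn_half_sq {m : ℕ} {ρ : ℝ} (hρ : 0 ≤ ρ) :
    ConvexOn ℝ (Set.univ : Set (EuclideanSpace ℝ (Fin m))) (fun z => ρ / 2 * ‖z‖ ^ 2) := by
  refine ⟨convex_univ, ?_⟩
  intro a _ b _ s t hs ht hst
  have hs1 : s = 1 - t := by linarith
  subst hs1
  have := norm_combo a b t
  simp only [smul_eq_mul]
  nlinarith [mul_nonneg hρ (mul_nonneg (mul_nonneg ht hs) (sq_nonneg ‖b - a‖))]

lemma strong_subgrad {m : ℕ} (f : EuclideanSpace ℝ (Fin m) → ℝ) (ρ : ℝ) (hρ : 0 < ρ)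
    (hf : ConvexOn ℝ Set.univ fun z => f z - ρ / 2 * ‖z‖ ^ 2)
    {x u : EuclideanSpace ℝ (Fin m)} (hu : u ∈ subdiff f x) (z : EuclideanSpace ℝ (Fin m)) :
    f x + ⟪u, z - x⟫ + ρ / 2 * ‖z - x‖ ^ 2 ≤ f z := by
  by_contra hc
  push_neg at hc
  set ε : ℝ := (f x + ⟪u, z - x⟫ + ρ / 2 * ‖z - x‖ ^ 2 - f z) / 2 with hε
  have hεpos : 0 < ε := by rw [hε]; linarith
  set t : ℝ := min 1 (ε / (ρ / 2 * ‖z - x‖ ^ 2 + 1)) with htdef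
  have hden : 0 < ρ / 2 * ‖z - x‖ ^ 2 + 1 := by positivity
  have ht0 : 0 < t := lt_min one_pos (div_pos hεpos hden)
  have ht1 : t ≤ 1 := min_le_left _ _
  have hte : t * (ρ / 2 * ‖z - x‖ ^ 2) ≤ ε := by
    have h1 : t ≤ ε / (ρ / 2 * ‖z - x‖ ^ 2 + 1) := min_le_right _ _
    have h2 : t * (ρ / 2 * ‖z - x‖ ^ 2 + 1) ≤ ε := by
      rw [← le_div_iff₀ hden] at *; linarith
    nlinarith [ht0.le]
  -- convexity inequality
  have hcvx := hf.2 (Set.mem_univ x) (Set.mem_univ z) (by linarith : (0:ℝ) ≤ 1 - t)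
    ht0.le (by ring)
  simp only [smul_eq_mul] at hcvx
  rw [norm_combo x z t] at hcvx
  -- subgradient inequality at the combination point
  have hsg := hu ((1 - t) • x + t • z)
  have hpt : ((1 - t) • x + t • z) - x = t • (z - x) := by
    rw [sub_smul, one_smul, smul_sub]; abel
  rw [hpt, real_inner_smul_right] at hsg
  have key : f x + ⟪u, z - x⟫ + ρ / 2 * (1 - t) * ‖z - x‖ ^ 2 ≤ f z := by
    have := hsg.trans (by linarith : f ((1 - t) • x + t • z) ≤
      (1 - t) * f x + t * f z - ρ / 2 * (t * (1 - t)) * ‖z - x‖ ^ 2)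
    have h3 : t * (f x + ⟪u, z - x⟫ + ρ / 2 * (1 - t) * ‖z - x‖ ^ 2) ≤ t * f z := by
      nlinarith
    exact le_of_mul_le_mul_left (by linarith [h3]) ht0
  nlinarith

lemma grad_mem_subdiff {m : ℕ} (g : EuclideanSpace ℝ (Fin m) → ℝ) (hg1 : ContDiff ℝ 1 g)
    (hgc : ConvexOn ℝ Set.univ g) (y : EuclideanSpace ℝ (Fin m)) :
    gradient g y ∈ subdiff g y := by
  intro z
  set d := z - y with hd
  have hdiff : DifferentiableAt ℝ g y := (hg1.differentiable one_ne_zero) y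
  have hgrad : HasGradientAt g (gradient g y) y := hdiff.hasGradientAt
  have hF := hgrad.hasFDerivAt
  have hline : HasDerivAt (fun t : ℝ => y + t • d) d 0 := by
    have h1 : HasDerivAt (fun t : ℝ => t • d) ((1:ℝ) • d) 0 :=
      (hasDerivAt_id (0:ℝ)).smul_const d
    simpa using h1.const_add y
  have hcomp : HasDerivAt (fun t : ℝ => g (y + t • d)) ⟪gradient g y, d⟫ 0 := by
    have hF0 : HasFDerivAt g ((InnerProductSpace.toDual ℝ (EuclideanSpace ℝ (Fin m))) (gradient g y)) (y + (0:ℝ) • d) := by simpa using hF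
    have := hF0.comp_hasDerivAt (0:ℝ) hline
    simpa [InnerProductSpace.toDual_apply_apply, Function.comp_def] using this
  have hslope := hasDerivAt_iff_tendsto_slope.mp hcomp
  have hslope' : Filter.Tendsto (slope (fun t : ℝ => g (y + t • d)) 0) (𝓝[>] (0:ℝ))
      (𝓝 ⟪gradient g y, d⟫) :=
    hslope.mono_left (nhdsWithin_mono _ (fun t ht => ne_of_gt ht))
  have hev : ∀ᶠ t in 𝓝[>] (0:ℝ), slope (fun t : ℝ => g (y + t • d)) 0 t ≤ g z - g y := by
    filter_upwards [Ioc_mem_nhdsGT_of_mem (Set.mem_Ico.mpr ⟨le_rfl, one_pos⟩)] with t ht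
    obtain ⟨ht0, ht1⟩ := ht
    have hcomb : y + t • d = (1 - t) • y + t • z := by
      rw [hd, sub_smul, one_smul, smul_sub]; abel
    have hcvx := hgc.2 (Set.mem_univ y) (Set.mem_univ z) (by linarith : (0:ℝ) ≤ 1 - t)
      ht0.le (by ring)
    simp only [smul_eq_mul] at hcvx
    rw [← hcomb] at hcvx
    rw [slope_def_field]
    simp only [sub_zero, zero_smul, add_zero]
    rw [div_le_iff₀ ht0]
    nlinarith
  have := le_of_tendsto hslope' hev
  linarith [this]

theorem stmt15 {m : ℕ} (g h : EuclideanSpace ℝ (Fin m) → ℝ) (ρ : ℝ) (hρ : 0 < ρ)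
    (hg : ConvexOn ℝ Set.univ fun z => g z - ρ / 2 * ‖z‖ ^ 2)
    (hh : ConvexOn ℝ Set.univ fun z => h z - ρ / 2 * ‖z‖ ^ 2)
    (hg1 : ContDiff ℝ 1 g)
    (φ : EuclideanSpace ℝ (Fin m) → ℝ) (hφ : φ = fun z => g z - h z)
    (hbdd : BddBelow (Set.range φ))
    (α : ℝ) (hα : 0 < α)
    (x y : ℕ → EuclideanSpace ℝ (Fin m)) (lam : ℕ → ℝ)
    (hlam : ∀ k, 0 ≤ lam k)
    (hsub : ∀ k, gradient g (y k) ∈ subdiff h (x k))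
    (hdesc : ∀ k, φ (y k + lam k • (y k - x k)) ≤ φ (y k) - α * lam k ^ 2 * ‖y k - x k‖ ^ 2)
    (hnext : ∀ k, x (k + 1) = y k + lam k • (y k - x k))
    (xs : EuclideanSpace ℝ (Fin m))
    (hconv : Tendsto x atTop (𝓝 xs))
    -- ∇g is Lipschitz continuous on a neighborhood of x*
    (hLip : ∃ L : NNReal, ∃ U ∈ 𝓝 xs, LipschitzOnWith L (fun z => gradient g z) U)
    (M θ : ℝ) (hM : 0 < M) (hθ : θ = 0)
    -- strong Kurdyka–Łojasiewicz inequality at x* with ψ(t) = M t^(1-θ)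
    (hKL : ∃ η > (0 : ℝ), ∃ U ∈ 𝓝 xs,
      ∀ z ∈ U, φ xs < φ z → φ z < φ xs + η →
        1 ≤ M * Metric.infDist 0 ((fun u => gradient g z - u) '' subdiff h z)) :
    ∃ N : ℕ, ∀ k, N ≤ k → x k = xs := by
  classical
  obtain ⟨L, U1, hU1, hL⟩ := hLip
  obtain ⟨η, hη, U2, hU2, hKLp⟩ := hKL
  have hφ' : ∀ z, φ z = g z - h z := fun z => by rw [hφ]
  -- convexity of g
  have hsq := convexOn_half_sq (m := m) (ρ := ρ) (by positivity)
  have hgc : ConvexOn ℝ Set.univ g := by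
    have := hg.add hsq
    have e : g = (fun z => g z - ρ / 2 * ‖z‖ ^ 2) + fun z => ρ / 2 * ‖z‖ ^ 2 := by
      funext z; simp
    rw [e]; exact this
  have hgrad := fun k => grad_mem_subdiff g hg1 hgc (y k)
  -- key strong descent inequality
  have hkey : ∀ k, φ (y k) + ρ * ‖y k - x k‖ ^ 2 ≤ φ (x k) := by
    intro k
    have A := strong_subgrad g ρ hρ hg (hgrad k) (x k)
    have B := strong_subgrad h ρ hρ hh (hsub k) (y k)
    rw [hφ' (y k), hφ' (x k)]
    have hn := norm_sub_rev (x k) (y k)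
    have hi : ⟪gradient g (y k), x k - y k⟫ = -⟪gradient g (y k), y k - x k⟫ := by
      rw [← inner_neg_right, neg_sub]
    rw [hi, hn] at A
    linarith
  have hchain : ∀ k, φ (x (k + 1)) ≤ φ (y k) := by
    intro k
    rw [hnext k]
    have h0 : 0 ≤ α * lam k ^ 2 * ‖y k - x k‖ ^ 2 := by positivity
    linarith [hdesc k]
  have hant : Antitone fun k => φ (x k) := by
    apply antitone_nat_of_succ_le
    intro k
    have h0 : 0 ≤ ρ * ‖y k - x k‖ ^ 2 := by positivity
    linarith [hkey k, hchain k]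
  have hb : BddBelow (Set.range fun k => φ (x k)) := by
    obtain ⟨b, hbb⟩ := hbdd
    refine ⟨b, ?_⟩
    rintro _ ⟨k, rfl⟩
    exact hbb ⟨x k, rfl⟩
  -- continuity of φ
  have hcg : Continuous g := hg1.continuous
  have hch : Continuous h := by
    have hc : Continuous fun z : EuclideanSpace ℝ (Fin m) => h z - ρ / 2 * ‖z‖ ^ 2 :=
      continuousOn_univ.mp (hh.continuousOn isOpen_univ)
    have hns : Continuous fun z : EuclideanSpace ℝ (Fin m) => ρ / 2 * ‖z‖ ^ 2 := by
      continuity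
    have := hc.add hns
    exact this.congr (fun z => by simp)
  have hcφ : Continuous φ := by rw [hφ]; exact hcg.sub hch
  have hta : Tendsto (fun k => φ (x k)) atTop (𝓝 (φ xs)) := (hcφ.tendsto xs).comp hconv
  have hlow : ∀ k, φ xs ≤ φ (x k) := fun k => hant.le_of_tendsto hta k
  have hta' : Tendsto (fun k => φ (x (k + 1))) atTop (𝓝 (φ xs)) :=
    hta.comp (tendsto_add_atTop_nat 1)
  have hdiff0 : Tendsto (fun k => φ (x k) - φ (x (k + 1))) atTop (𝓝 0) := by
    simpa using hta.sub hta'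
  -- ‖y k - x k‖ → 0
  have hsq0 : Tendsto (fun k => ‖y k - x k‖ ^ 2) atTop (𝓝 0) := by
    apply squeeze_zero (fun k => sq_nonneg _) (fun k => ?_)
      (by simpa using hdiff0.const_mul ρ⁻¹)
    have h1 : ρ * ‖y k - x k‖ ^ 2 ≤ φ (x k) - φ (x (k + 1)) := by
      linarith [hkey k, hchain k]
    calc ‖y k - x k‖ ^ 2 = ρ⁻¹ * (ρ * ‖y k - x k‖ ^ 2) := by field_simp
      _ ≤ ρ⁻¹ * (φ (x k) - φ (x (k + 1))) :=
        mul_le_mul_of_nonneg_left h1 (by positivity)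
  have hnd : Tendsto (fun k => ‖y k - x k‖) atTop (𝓝 0) := by
    have := (Real.continuous_sqrt.tendsto 0).comp hsq0
    simp only [Function.comp_def, Real.sqrt_zero] at this
    refine this.congr fun k => Real.sqrt_sq (norm_nonneg _)
  have hdten : Tendsto (fun k => y k - x k) atTop (𝓝 0) :=
    tendsto_zero_iff_norm_tendsto_zero.mpr hnd
  have hty : Tendsto y atTop (𝓝 xs) := by
    have := hconv.add hdten
    simpa using this
  -- eventualities
  have e1 : ∀ᶠ k in atTop, x k ∈ U1 := hconv hU1
  have e2 : ∀ᶠ k in atTop, y k ∈ U1 := hty hU1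
  have e3 : ∀ᶠ k in atTop, x k ∈ U2 := hconv hU2
  have e4 : ∀ᶠ k in atTop, φ (x k) < φ xs + η :=
    hta.eventually_lt_const (by linarith)
  have hP : (0 : ℝ) < M * ((L : ℝ) + 1) := mul_pos hM (by positivity)
  have e5 : ∀ᶠ k in atTop, ‖y k - x k‖ < (M * ((L : ℝ) + 1))⁻¹ :=
    hnd.eventually_lt_const (inv_pos.mpr hP)
  obtain ⟨N, hN⟩ := eventually_atTop.mp ((((e1.and e2).and (e3.and e4)).and e5))
  -- for k ≥ N, φ (x k) = φ xs
  have heq : ∀ k, N ≤ k → φ (x k) = φ xs := by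
    intro k hk
    obtain ⟨⟨⟨hx1, hy1⟩, hx2, hlt⟩, hsmall⟩ := hN k hk
    refine le_antisymm ?_ (hlow k)
    by_contra hgt
    push_neg at hgt
    have hKLk := hKLp (x k) hx2 hgt hlt
    have hmem : gradient g (x k) - gradient g (y k)
        ∈ (fun u => gradient g (x k) - u) '' subdiff h (x k) :=
      ⟨gradient g (y k), hsub k, rfl⟩
    have hinf : Metric.infDist 0 ((fun u => gradient g (x k) - u) '' subdiff h (x k))
        ≤ ‖gradient g (x k) - gradient g (y k)‖ := by
      have := Metric.infDist_le_dist_of_mem (x := 0) hmem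
      rwa [dist_zero_left] at this
    have hlipk : dist (gradient g (x k)) (gradient g (y k)) ≤ L * dist (x k) (y k) :=
      hL.dist_le_mul _ hx1 _ hy1
    rw [dist_eq_norm, dist_eq_norm] at hlipk
    rw [norm_sub_rev (x k) (y k)] at hlipk
    have hbound : Metric.infDist 0 ((fun u => gradient g (x k) - u) '' subdiff h (x k))
        ≤ (L : ℝ) * ‖y k - x k‖ := hinf.trans hlipk
    have h6 : ‖y k - x k‖ * (M * ((L : ℝ) + 1)) < 1 := (lt_div_iff₀ hP).mp (by
      rwa [← one_div] at hsmall)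
    nlinarith [mul_le_mul_of_nonneg_left hbound hM.le, NNReal.coe_nonneg L,
      mul_nonneg hM.le (norm_nonneg (y k - x k))]
  -- the sequence is eventually constant
  have hstep : ∀ k, N ≤ k → x (k + 1) = x k := by
    intro k hk
    have e1' := heq k hk
    have e2' := heq (k + 1) (hk.trans (Nat.le_succ k))
    have h1 : ρ * ‖y k - x k‖ ^ 2 ≤ 0 := by linarith [hkey k, hchain k]
    have h2 : (0 : ℝ) ≤ ρ * ‖y k - x k‖ ^ 2 := by positivity
    have h3 : ‖y k - x k‖ ^ 2 = 0 := by
      rcases mul_eq_zero.mp (le_antisymm h1 h2) with h | h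
      · exact absurd h (ne_of_gt hρ)
      · exact h
    have h4 : y k - x k = 0 := by
      rw [← norm_eq_zero]
      exact (pow_eq_zero_iff two_ne_zero).mp h3
    have h5 : y k = x k := by rwa [sub_eq_zero] at h4
    rw [hnext k, h4, smul_zero, add_zero, h5]
  have hconst : ∀ k, N ≤ k → x k = x N := by
    intro k hk
    induction k, hk using Nat.le_induction with
    | base => rfl
    | succ n hn ih => rw [hstep n hn, ih]
  have hxN : x N = xs := by
    have hev : x =ᶠ[atTop] fun _ => x N :=
      eventually_atTop.mpr ⟨N, fun k hk => hconst k hk⟩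
    have hc : Tendsto (fun _ : ℕ => x N) atTop (𝓝 xs) := Filter.Tendsto.congr' hev hconv
    exact tendsto_nhds_unique tendsto_const_nhds hc
  exact ⟨N, fun k hk => by rw [hconst k hk, hxN]⟩
end
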